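/- Investment incentives under associated policies: Fix a game (X, λ_w, p, G, v_q, v_u, ω) with likelihood values 0 < l_1 < … < l_n (l_0 := 0), and define WW(l_m) := ω Σ_{x_𝒴 : p(x_𝒴|q)/p(x_𝒴|u) > l_m} (p(x_𝒴|q) − p(x_𝒴|u)) for m = 0,1,…,n, extended to a piecewise-linear function WW : [0, l_n] → ℝ interpolating the points (l_m, WW(l_m)). Then for any group i and any within-group decision policy d(i) associated with a likelihood mixture ℓ ∈ [0, l_n], the investment incentive satisfies ω Σ_{x∈X} d(i,x)(p(x|i,q) − p(x|i,u)) = WW(ℓ). In particular, under any fair decision policy the investment incentive is the same for both groups. -/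

import Mathlib

/-!
Formalization of the Coate–Loury statistical discrimination model with
machine-learning (contractible) beliefs, following Zhu,
"The Impact of Equal Opportunity on Statistical Discrimination".
-/

open scoped BigOperators
open MeasureTheory

noncomputable section

attribute [local instance] Classical.propDecidable

/-- Group identities `I = {w, b}`. -/
inductive GrpI
  | w
  | b
deriving DecidableEq

instance : Fintype GrpI := ⟨{GrpI.w, GrpI.b}, fun x => by cases x <;> simp⟩

/-- Classes `Y = {q, u}` (qualified / unqualified). -/
inductive Cls
  | q
  | u
deriving DecidableEq

instance : Fintype Cls := ⟨{Cls.q, Cls.u}, fun x => by cases x <;> simp⟩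

/-- A game `(X, λ_w, p, G, v_q, v_u, ω)` of the Coate–Loury model.  The set of
other features is the finite product `X = X_1 × ⋯ × X_N`, encoded as the pi type
`(j : Fin N) → Xs j`.  The statistical model (Assumption 1) is encoded through a
nonempty subset `Ysub ⊆ {1, …, N}` together with the factorization
`p(x | i, y) = pY(x_𝒴 | y) · pC(x_{-𝒴} | i, x_𝒴)`.  The cost distribution is
given by an everywhere positive density `g` with `∫ g = 1` and `∫ |c| g(c) dc < ∞`. -/
structure Game (N : ℕ) (Xs : Fin N → Type) [∀ j, Fintype (Xs j)]
    [∀ j, Nonempty (Xs j)] where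
  lamw : ℝ
  lamw_pos : 0 < lamw
  lamw_lt_one : lamw < 1
  Ysub : Finset (Fin N)
  Ysub_nonempty : Ysub.Nonempty
  pY : ((j : Ysub) → Xs j.1) → Cls → ℝ
  pC : GrpI → ((j : Fin N) → Xs j) → ℝ
  pY_pos : ∀ xY y, 0 < pY xY y
  pC_pos : ∀ i x, 0 < pC i x
  pY_sum : ∀ y, ∑ xY, pY xY y = 1
  pC_sum : ∀ (i : GrpI) (xY : (j : Ysub) → Xs j.1),
    ∑ x ∈ Finset.univ.filter
        (fun x : (j : Fin N) → Xs j => (fun j : Ysub => x j.1) = xY),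
      pC i x = 1
  g : ℝ → ℝ
  g_pos : ∀ c, 0 < g c
  g_int : Integrable g
  g_norm : (∫ c, g c) = 1
  g_abs_int : Integrable fun c => |c| * g c
  vq : ℝ
  vu : ℝ
  om : ℝ
  vq_pos : 0 < vq
  vu_pos : 0 < vu
  om_pos : 0 < om

section Policies

variable {N : ℕ} {Xs : Fin N → Type}

/-- A decision policy `d : I × X → [0,1]`. -/
def IsPolicy (d : GrpI → ((j : Fin N) → Xs j) → ℝ) : Prop :=
  ∀ i x, d i x ∈ Set.Icc (0 : ℝ) 1

/-- A decision policy when data is color-blind, `d_cb : X → [0,1]`. -/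
def IsCbPolicy (dcb : ((j : Fin N) → Xs j) → ℝ) : Prop :=
  ∀ x, dcb x ∈ Set.Icc (0 : ℝ) 1

/-- `S ⊆ {1, …, N}` has the dependence property for the belief `f`:
`f` depends on `(i, x)` only up to `(i, x_S)`. -/
def DepProp {I : Type} (f : I → ((j : Fin N) → Xs j) → ℝ)
    (S : Finset (Fin N)) : Prop :=
  ∀ (i : I) (x x' : (j : Fin N) → Xs j), (∀ j ∈ S, x j = x' j) → f i x = f i x'

/-- The minimal subset `Ŷ(f)` with the dependence property. -/
def minDep {I : Type} (f : I → ((j : Fin N) → Xs j) → ℝ) : Finset (Fin N) :=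
  Finset.univ.filter fun j => ∀ S : Finset (Fin N), DepProp f S → j ∈ S

variable [∀ j, Fintype (Xs j)]

/-- Full-support probability distributions on `I × X` (the set `Δ°(I × X)`). -/
def FullSupp (μ : GrpI → ((j : Fin N) → Xs j) → ℝ) : Prop :=
  (∀ i x, 0 < μ i x) ∧ ∑ i, ∑ x, μ i x = 1

/-- Beliefs valued in `(0, 1)`. -/
def OpenBelief (f : GrpI → ((j : Fin N) → Xs j) → ℝ) : Prop :=
  ∀ i x, f i x ∈ Set.Ioo (0 : ℝ) 1

/-- Acceptance rate of group `i`. -/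
def AR (i : GrpI) (d μ : GrpI → ((j : Fin N) → Xs j) → ℝ) : ℝ :=
  (∑ x, d i x * μ i x) / ∑ x, μ i x

/-- True positive rate of group `i`. -/
def TP (i : GrpI) (d μ f : GrpI → ((j : Fin N) → Xs j) → ℝ) : ℝ :=
  (∑ x, d i x * μ i x * f i x) / ∑ x, μ i x * f i x

/-- The equal opportunity control `k(X, μ, f)`. -/
def EOset (μ f : GrpI → ((j : Fin N) → Xs j) → ℝ) :
    Set (GrpI → ((j : Fin N) → Xs j) → ℝ) :=
  {d | IsPolicy d ∧ TP GrpI.w d μ f = TP GrpI.b d μ f}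

/-- The color-blind control: all color-blind decision policies. -/
def CBset : Set (GrpI → ((j : Fin N) → Xs j) → ℝ) :=
  {d | IsPolicy d ∧ ∀ x, d GrpI.w x = d GrpI.b x}

/-- The no proxies control: policies depending on `(i,x)` only through `x_{Ŷ(f)}`. -/
def NoProxies (_μ f : GrpI → ((j : Fin N) → Xs j) → ℝ) :
    Set (GrpI → ((j : Fin N) → Xs j) → ℝ) :=
  {d | IsPolicy d ∧
    ∀ i i' x x', (∀ j ∈ minDep f, x j = x' j) → d i x = d i' x'}

/-- `ℓ²` distance between decision policies. -/
def polDist (d d' : GrpI → ((j : Fin N) → Xs j) → ℝ) : ℝ :=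
  Real.sqrt (∑ i, ∑ x, (d i x - d' i x) ^ 2)

/-- `ℓ²` distance between pairs `(μ, f)`. -/
def pairDist (μ f μ' f' : GrpI → ((j : Fin N) → Xs j) → ℝ) : ℝ :=
  Real.sqrt ((∑ i, ∑ x, (μ i x - μ' i x) ^ 2) + ∑ i, ∑ x, (f i x - f' i x) ^ 2)

/-- `ℓ²` distance between strategy profiles `(c̄, d)`. -/
def profDist (c : GrpI → ℝ) (d : GrpI → ((j : Fin N) → Xs j) → ℝ)
    (c' : GrpI → ℝ) (d' : GrpI → ((j : Fin N) → Xs j) → ℝ) : ℝ :=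
  Real.sqrt ((∑ i, (c i - c' i) ^ 2) + ∑ i, ∑ x, (d i x - d' i x) ^ 2)

end Policies

/-- Upper hemicontinuity of a correspondence on a set. -/
def UpperHemicontinuousOn' {α β : Type*} [TopologicalSpace α] [TopologicalSpace β]
    (F : α → Set β) (S : Set α) : Prop :=
  ∀ a ∈ S, ∀ V : Set β, IsOpen V → F a ⊆ V → ∀ᶠ a' in nhdsWithin a S, F a' ⊆ V

/-- Lower hemicontinuity of a correspondence on a set. -/
def LowerHemicontinuousOn' {α β : Type*} [TopologicalSpace α] [TopologicalSpace β]
    (F : α → Set β) (S : Set α) : Prop :=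
  ∀ a ∈ S, ∀ V : Set β, IsOpen V → (F a ∩ V).Nonempty →
    ∀ᶠ a' in nhdsWithin a S, (F a' ∩ V).Nonempty

namespace Game

variable {N : ℕ} {Xs : Fin N → Type} [∀ j, Fintype (Xs j)] [∀ j, Nonempty (Xs j)]
variable (Γ : Game N Xs)

/-- Projection `x ↦ x_𝒴`. -/
def proj (x : (j : Fin N) → Xs j) : (j : Γ.Ysub) → Xs j.1 := fun j => x j.1

/-- `p(x | i, y) = p(x_𝒴 | y) · p(x_{-𝒴} | i, x_𝒴)`. -/
def p (i : GrpI) (x : (j : Fin N) → Xs j) (y : Cls) : ℝ :=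
  Γ.pY (Γ.proj x) y * Γ.pC i x

/-- Group probabilities `λ_w`, `λ_b = 1 - λ_w`. -/
def lam : GrpI → ℝ := fun i =>
  match i with
  | GrpI.w => Γ.lamw
  | GrpI.b => 1 - Γ.lamw

/-- The CDF `G` of the cost distribution. -/
def G (c : ℝ) : ℝ := ∫ t in Set.Iic c, Γ.g t

/-- The likelihood function `l(x) = p(x_𝒴 | q) / p(x_𝒴 | u)`. -/
def lhd (x : (j : Fin N) → Xs j) : ℝ :=
  Γ.pY (Γ.proj x) Cls.q / Γ.pY (Γ.proj x) Cls.u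

/-- The likelihood function on `X_𝒴`. -/
def lhdY (xY : (j : Γ.Ysub) → Xs j.1) : ℝ := Γ.pY xY Cls.q / Γ.pY xY Cls.u

/-- The set of likelihood values `{l_1 < … < l_n}`. -/
def LVset : Set ℝ := Set.range Γ.lhd

/-- The assumption that `1` is not a likelihood value
(equivalently, `WW` is single-peaked). -/
def OneNotLV : Prop := (1 : ℝ) ∉ Γ.LVset

/-- The largest likelihood value `l_n`. -/
def lmax : ℝ := sSup Γ.LVset

/-- `⌈ℓ⌉`: the smallest likelihood value `≥ ℓ`. -/
def lceil (ℓ : ℝ) : ℝ := sInf {v | v ∈ Γ.LVset ∧ ℓ ≤ v}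

/-- `⌈ℓ⌉⁻`: the next smallest likelihood value below `⌈ℓ⌉` (or `l_0 = 0`). -/
def lceilm (ℓ : ℝ) : ℝ := sSup (insert 0 {v | v ∈ Γ.LVset ∧ v < Γ.lceil ℓ})

/-- The smallest likelihood value `> ℓ`. -/
def lnext (ℓ : ℝ) : ℝ := sInf {v | v ∈ Γ.LVset ∧ ℓ < v}

/-- The true distribution of features `μ_RE` given cost thresholds `c̄`. -/
def muRE (c : GrpI → ℝ) (i : GrpI) (x : (j : Fin N) → Xs j) : ℝ :=
  Γ.lam i * (Γ.G (c i) * Γ.p i x Cls.q + (1 - Γ.G (c i)) * Γ.p i x Cls.u)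

/-- The true conditional probability (calibrated belief) `f_RE` given `c̄`. -/
def fRE (c : GrpI → ℝ) (i : GrpI) (x : (j : Fin N) → Xs j) : ℝ :=
  Γ.G (c i) * Γ.p i x Cls.q /
    (Γ.G (c i) * Γ.p i x Cls.q + (1 - Γ.G (c i)) * Γ.p i x Cls.u)

/-- Utility `U_i(c̄(i), d(i))` of the representative `i`-applicant. -/
def Uapp (i : GrpI) (ci : ℝ) (di : ((j : Fin N) → Xs j) → ℝ) : ℝ :=
  Γ.om * ∑ x, (Γ.G ci * Γ.p i x Cls.q + (1 - Γ.G ci) * Γ.p i x Cls.u) * di x -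
    ∫ t in Set.Iic ci, t * Γ.g t

/-- Firm utility `U_F(d, μ, f)`. -/
def UF (d μ f : GrpI → ((j : Fin N) → Xs j) → ℝ) : ℝ :=
  ∑ i, ∑ x, d i x * μ i x * (f i x * Γ.vq - (1 - f i x) * Γ.vu)

/-- The color-blind true distribution of features `μ_cb,RE`. -/
def mucbRE (c : GrpI → ℝ) (x : (j : Fin N) → Xs j) : ℝ :=
  Γ.muRE c GrpI.w x + Γ.muRE c GrpI.b x

/-- The color-blind true conditional probability `f_cb,RE`. -/
def fcbRE (c : GrpI → ℝ) (x : (j : Fin N) → Xs j) : ℝ :=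
  (Γ.muRE c GrpI.w x * Γ.fRE c GrpI.w x + Γ.muRE c GrpI.b x * Γ.fRE c GrpI.b x) /
    Γ.mucbRE c x

/-- Firm utility when data is color-blind. -/
def UFcb (dcb μcb fcb : ((j : Fin N) → Xs j) → ℝ) : ℝ :=
  ∑ x, dcb x * μcb x * (fcb x * Γ.vq - (1 - fcb x) * Γ.vu)

/-- `d(i | l_m)`: conditional acceptance probability at likelihood value `lv`. -/
def dcond (i : GrpI) (di : ((j : Fin N) → Xs j) → ℝ) (lv : ℝ) : ℝ :=
  (∑ x ∈ Finset.univ.filter (fun x => Γ.lhd x = lv), Γ.p i x Cls.q * di x) /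
    ∑ x ∈ Finset.univ.filter (fun x => Γ.lhd x = lv), Γ.p i x Cls.q

/-- The within-group policy `d(i)` is associated with the likelihood mixture `ℓ`. -/
def AssociatedWith (i : GrpI) (di : ((j : Fin N) → Xs j) → ℝ) (ℓ : ℝ) : Prop :=
  0 ≤ ℓ ∧ ℓ ≤ Γ.lmax ∧
    ∀ lv ∈ Γ.LVset,
      (Γ.lceil ℓ < lv → Γ.dcond i di lv = 1) ∧
      (lv = Γ.lceil ℓ →
        Γ.dcond i di lv = (Γ.lceil ℓ - ℓ) / (Γ.lceil ℓ - Γ.lceilm ℓ)) ∧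
      (lv < Γ.lceil ℓ → Γ.dcond i di lv = 0)

/-- A decision policy is fair if both within-group policies are associated with
the same likelihood mixture. -/
def Fair (d : GrpI → ((j : Fin N) → Xs j) → ℝ) : Prop :=
  ∃ ℓ, Γ.AssociatedWith GrpI.w (d GrpI.w) ℓ ∧ Γ.AssociatedWith GrpI.b (d GrpI.b) ℓ

/-- `WW(l_m) = ω ∑_{x_𝒴 : l(x_𝒴) > l_m} (p(x_𝒴|q) - p(x_𝒴|u))`. -/
def WWval (t : ℝ) : ℝ :=
  Γ.om * ∑ xY ∈ Finset.univ.filter (fun xY => t < Γ.lhdY xY),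
    (Γ.pY xY Cls.q - Γ.pY xY Cls.u)

/-- The piecewise-linear function `WW` interpolating the points `(l_m, WW(l_m))`. -/
def WW (ℓ : ℝ) : ℝ :=
  if Γ.lceil ℓ = Γ.lceilm ℓ then Γ.WWval (Γ.lceil ℓ)
  else
    (Γ.WWval (Γ.lceilm ℓ) * (Γ.lceil ℓ - ℓ) +
        Γ.WWval (Γ.lceil ℓ) * (ℓ - Γ.lceilm ℓ)) /
      (Γ.lceil ℓ - Γ.lceilm ℓ)

/-- `EĒ(l_m)`: the unique cost with `G(EĒ(l_m)) = 1 / ((v_q/v_u) l_m + 1)`. -/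
def EEbar (lv : ℝ) : ℝ := sInf {cc | 1 / (Γ.vq / Γ.vu * lv + 1) ≤ Γ.G cc}

/-- The correspondence `EE : [0, l_n] ⇒ ℝ`. -/
def EE (ℓ : ℝ) : Set ℝ :=
  if ℓ = 0 then Set.Ici (Γ.EEbar (Γ.lceil 0))
  else if ℓ = Γ.lmax then Set.Iic (Γ.EEbar Γ.lmax)
  else if ℓ ∈ Γ.LVset then Set.Icc (Γ.EEbar (Γ.lnext ℓ)) (Γ.EEbar ℓ)
  else {Γ.EEbar (Γ.lceil ℓ)}

/-- Each representative applicant's cost threshold is a best response to `d`. -/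
def BestResponds (c : GrpI → ℝ) (d : GrpI → ((j : Fin N) → Xs j) → ℝ) : Prop :=
  ∀ (i : GrpI) (c' : ℝ), Γ.Uapp i c' (d i) ≤ Γ.Uapp i (c i) (d i)

/-- An (un-controlled) equilibrium. -/
def IsEquilibrium (c : GrpI → ℝ) (d : GrpI → ((j : Fin N) → Xs j) → ℝ) : Prop :=
  IsPolicy d ∧ Γ.BestResponds c d ∧
    ∀ d', IsPolicy d' →
      Γ.UF d' (Γ.muRE c) (Γ.fRE c) ≤ Γ.UF d (Γ.muRE c) (Γ.fRE c)

/-- A `k`-controlled equilibrium, for the control `(μ, f) ↦ K μ f`. -/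
def IsControlledEq
    (K : (GrpI → ((j : Fin N) → Xs j) → ℝ) → (GrpI → ((j : Fin N) → Xs j) → ℝ) →
      Set (GrpI → ((j : Fin N) → Xs j) → ℝ))
    (c : GrpI → ℝ) (d : GrpI → ((j : Fin N) → Xs j) → ℝ) : Prop :=
  d ∈ K (Γ.muRE c) (Γ.fRE c) ∧ Γ.BestResponds c d ∧
    ∀ d' ∈ K (Γ.muRE c) (Γ.fRE c),
      Γ.UF d' (Γ.muRE c) (Γ.fRE c) ≤ Γ.UF d (Γ.muRE c) (Γ.fRE c)

/-- `𝒮_k(μ, f)`: firm-optimal policies under the control `K` at `(μ, f)`. -/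
def Smax
    (K : (GrpI → ((j : Fin N) → Xs j) → ℝ) → (GrpI → ((j : Fin N) → Xs j) → ℝ) →
      Set (GrpI → ((j : Fin N) → Xs j) → ℝ))
    (μ f : GrpI → ((j : Fin N) → Xs j) → ℝ) :
    Set (GrpI → ((j : Fin N) → Xs j) → ℝ) :=
  {d | d ∈ K μ f ∧ ∀ d' ∈ K μ f, Γ.UF d' μ f ≤ Γ.UF d μ f}

/-- A `k`-controlled `ε`-equilibrium. -/
def IsCtrlEpsEq
    (K : (GrpI → ((j : Fin N) → Xs j) → ℝ) → (GrpI → ((j : Fin N) → Xs j) → ℝ) →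
      Set (GrpI → ((j : Fin N) → Xs j) → ℝ))
    (ε : ℝ) (c : GrpI → ℝ) (d : GrpI → ((j : Fin N) → Xs j) → ℝ) : Prop :=
  ∃ μ f, FullSupp μ ∧ OpenBelief f ∧
    pairDist μ f (Γ.muRE c) (Γ.fRE c) ≤ ε ∧
    Γ.BestResponds c d ∧ d ∈ K μ f ∧ ∀ d' ∈ K μ f, Γ.UF d' μ f ≤ Γ.UF d μ f

/-- Best responses of applicants to a color-blind policy. -/
def BestRespondsCb (c : GrpI → ℝ) (dcb : ((j : Fin N) → Xs j) → ℝ) : Prop :=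
  ∀ (i : GrpI) (c' : ℝ), Γ.Uapp i c' dcb ≤ Γ.Uapp i (c i) dcb

/-- An equilibrium when data is color-blind (unrestricted control). -/
def IsCbEquilibrium (c : GrpI → ℝ) (dcb : ((j : Fin N) → Xs j) → ℝ) : Prop :=
  IsCbPolicy dcb ∧ Γ.BestRespondsCb c dcb ∧
    ∀ dcb', IsCbPolicy dcb' →
      Γ.UFcb dcb' (Γ.mucbRE c) (Γ.fcbRE c) ≤ Γ.UFcb dcb (Γ.mucbRE c) (Γ.fcbRE c)

/-- A `k_cb`-controlled equilibrium when data is color-blind. -/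
def IsCbControlledEq (K : Set (((j : Fin N) → Xs j) → ℝ)) (c : GrpI → ℝ)
    (dcb : ((j : Fin N) → Xs j) → ℝ) : Prop :=
  dcb ∈ K ∧ Γ.BestRespondsCb c dcb ∧
    ∀ dcb' ∈ K,
      Γ.UFcb dcb' (Γ.mucbRE c) (Γ.fcbRE c) ≤ Γ.UFcb dcb (Γ.mucbRE c) (Γ.fcbRE c)

end Game

/-- A control when data is color-blind: for each `X` and each
`(μ_cb, f_cb) ∈ Δ°(X) × (0,1)^X` it specifies a nonempty compact set of
color-blind decision policies. -/
structure CbControl : Type 1 where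
  sets : ∀ (N : ℕ) (Xs : Fin N → Type) [∀ j, Fintype (Xs j)] [∀ j, Nonempty (Xs j)],
    (((j : Fin N) → Xs j) → ℝ) → (((j : Fin N) → Xs j) → ℝ) →
      Set (((j : Fin N) → Xs j) → ℝ)
  nonempty : ∀ (N : ℕ) (Xs : Fin N → Type) [∀ j, Fintype (Xs j)]
    [∀ j, Nonempty (Xs j)] (μ f : ((j : Fin N) → Xs j) → ℝ),
    (∀ x, 0 < μ x) → (∑ x, μ x = 1) → (∀ x, f x ∈ Set.Ioo (0 : ℝ) 1) →
    (sets N Xs μ f).Nonempty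
  compact : ∀ (N : ℕ) (Xs : Fin N → Type) [∀ j, Fintype (Xs j)]
    [∀ j, Nonempty (Xs j)] (μ f : ((j : Fin N) → Xs j) → ℝ),
    (∀ x, 0 < μ x) → (∑ x, μ x = 1) → (∀ x, f x ∈ Set.Ioo (0 : ℝ) 1) →
    IsCompact (sets N Xs μ f)
  mem_policy : ∀ (N : ℕ) (Xs : Fin N → Type) [∀ j, Fintype (Xs j)]
    [∀ j, Nonempty (Xs j)] (μ f : ((j : Fin N) → Xs j) → ℝ),
    (∀ x, 0 < μ x) → (∑ x, μ x = 1) → (∀ x, f x ∈ Set.Ioo (0 : ℝ) 1) →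
    sets N Xs μ f ⊆ {dcb | IsCbPolicy dcb}

/-! On a fiber `{l(x) = v}` one has `p(x|i,u) = p(x|i,q) / v`, so the fiber's contribution to
the incentive depends on `d(i)` only through the fiber average `d(i|v)`. For an associated policy
that average is `θ·[⌈ℓ⌉⁻ < v] + (1 - θ)·[⌈ℓ⌉ < v]` with `θ = (⌈ℓ⌉ - ℓ)/(⌈ℓ⌉ - ⌈ℓ⌉⁻)`, because no
likelihood value lies strictly between `⌈ℓ⌉⁻` and `⌈ℓ⌉`. Summing the two threshold policies over
`x` and marginalizing out `x_{-𝒴}` gives `θ·WW(⌈ℓ⌉⁻) + (1 - θ)·WW(⌈ℓ⌉)`, the linear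
interpolation. -/

namespace Game

open Finset

variable {N : ℕ} {Xs : Fin N → Type} [∀ j, Fintype (Xs j)] [∀ j, Nonempty (Xs j)]
variable (Γ : Game N Xs)

theorem lhd_pos (x : (j : Fin N) → Xs j) : 0 < Γ.lhd x :=
  div_pos (Γ.pY_pos _ _) (Γ.pY_pos _ _)

theorem p_pos (i : GrpI) (x : (j : Fin N) → Xs j) (y : Cls) : 0 < Γ.p i x y :=
  mul_pos (Γ.pY_pos _ _) (Γ.pC_pos _ _)

theorem p_q_sub_p_u (i : GrpI) (x : (j : Fin N) → Xs j) :
    Γ.p i x Cls.q - Γ.p i x Cls.u = (1 - (Γ.lhd x)⁻¹) * Γ.p i x Cls.q := by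
  have hq := (Γ.pY_pos (Γ.proj x) Cls.q).ne'
  have hu := (Γ.pY_pos (Γ.proj x) Cls.u).ne'
  simp only [p, lhd]
  field_simp

theorem sum_comp_proj_mul_pC (i : GrpI) (F : ((j : Γ.Ysub) → Xs j.1) → ℝ) :
    ∑ x, F (Γ.proj x) * Γ.pC i x = ∑ xY, F xY := by
  rw [← Finset.sum_fiberwise univ Γ.proj]
  refine sum_congr rfl fun xY _ => ?_
  calc ∑ x ∈ univ with Γ.proj x = xY, F (Γ.proj x) * Γ.pC i x
      = F xY * ∑ x ∈ univ with Γ.proj x = xY, Γ.pC i x := by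
        rw [mul_sum]
        exact sum_congr rfl fun x hx => by rw [(mem_filter.1 hx).2]
    _ = F xY := by rw [show ∑ x ∈ univ with Γ.proj x = xY, Γ.pC i x = 1 from Γ.pC_sum i xY,
        mul_one]

theorem om_mul_sum_filter_lt_lhd_eq_WWval (i : GrpI) (t : ℝ) :
    Γ.om * ∑ x ∈ univ with t < Γ.lhd x, (Γ.p i x Cls.q - Γ.p i x Cls.u) = Γ.WWval t := by
  rw [WWval, sum_filter, sum_filter]
  congr 1
  rw [← Γ.sum_comp_proj_mul_pC i]
  refine sum_congr rfl fun x _ => ?_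
  change _ = (if t < Γ.lhd x then _ else 0) * _
  unfold p
  split_ifs <;> ring

theorem sum_fiber_mul_sub_eq_dcond_mul_sub (i : GrpI) (di : ((j : Fin N) → Xs j) → ℝ) {v : ℝ}
    (hv : v ∈ Γ.LVset) :
    ∑ x ∈ univ with Γ.lhd x = v, di x * (Γ.p i x Cls.q - Γ.p i x Cls.u) =
      ∑ x ∈ univ with Γ.lhd x = v, Γ.dcond i di (Γ.lhd x) * (Γ.p i x Cls.q - Γ.p i x Cls.u) := by
  obtain ⟨x₀, rfl⟩ := hv
  have hfiber : ∀ f : ((j : Fin N) → Xs j) → ℝ,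
      ∑ x ∈ univ with Γ.lhd x = Γ.lhd x₀, f x * (Γ.p i x Cls.q - Γ.p i x Cls.u) =
        (1 - (Γ.lhd x₀)⁻¹) * ∑ x ∈ univ with Γ.lhd x = Γ.lhd x₀, Γ.p i x Cls.q * f x := by
    intro f
    rw [mul_sum]
    refine sum_congr rfl fun x hx => ?_
    rw [Γ.p_q_sub_p_u, (mem_filter.1 hx).2]
    ring
  have hmass : 0 < ∑ x ∈ univ with Γ.lhd x = Γ.lhd x₀, Γ.p i x Cls.q :=
    sum_pos (fun x _ => Γ.p_pos i x Cls.q) ⟨x₀, by simp⟩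
  calc _ = (1 - (Γ.lhd x₀)⁻¹) * ∑ x ∈ univ with Γ.lhd x = Γ.lhd x₀, Γ.p i x Cls.q * di x :=
        hfiber di
    _ = (1 - (Γ.lhd x₀)⁻¹) *
          (∑ x ∈ univ with Γ.lhd x = Γ.lhd x₀, Γ.p i x Cls.q) * Γ.dcond i di (Γ.lhd x₀) := by
        rw [dcond, mul_assoc, mul_div_cancel₀ _ hmass.ne']
    _ = (1 - (Γ.lhd x₀)⁻¹) *
          ∑ x ∈ univ with Γ.lhd x = Γ.lhd x₀, Γ.p i x Cls.q * Γ.dcond i di (Γ.lhd x) := by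
        rw [mul_assoc, sum_mul]
        exact congrArg _ (sum_congr rfl fun x hx => by rw [(mem_filter.1 hx).2])
    _ = _ := (hfiber _).symm

theorem sum_mul_sub_eq_sum_dcond_mul_sub (i : GrpI) (di : ((j : Fin N) → Xs j) → ℝ) :
    ∑ x, di x * (Γ.p i x Cls.q - Γ.p i x Cls.u) =
      ∑ x, Γ.dcond i di (Γ.lhd x) * (Γ.p i x Cls.q - Γ.p i x Cls.u) := by
  have hmaps : ∀ x ∈ (univ : Finset ((j : Fin N) → Xs j)), Γ.lhd x ∈ univ.image Γ.lhd :=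
    fun x _ => mem_image_of_mem _ (mem_univ x)
  rw [← sum_fiberwise_of_maps_to hmaps, ← sum_fiberwise_of_maps_to hmaps]
  refine sum_congr rfl fun v hv => Γ.sum_fiber_mul_sub_eq_dcond_mul_sub i di ?_
  obtain ⟨x, -, rfl⟩ := mem_image.1 hv
  exact ⟨x, rfl⟩

theorem LVset_finite : Γ.LVset.Finite := Set.finite_range _

theorem lmax_mem_LVset : Γ.lmax ∈ Γ.LVset :=
  (Set.range_nonempty _).csSup_mem Γ.LVset_finite

theorem lceil_mem_LVset {ℓ : ℝ} (hℓ : ℓ ≤ Γ.lmax) : Γ.lceil ℓ ∈ Γ.LVset := by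
  have hfin : {v | v ∈ Γ.LVset ∧ ℓ ≤ v}.Finite := Γ.LVset_finite.subset fun _ hv => hv.1
  have hne : {v | v ∈ Γ.LVset ∧ ℓ ≤ v}.Nonempty := ⟨Γ.lmax, Γ.lmax_mem_LVset, hℓ⟩
  exact (hne.csInf_mem hfin).1

theorem finite_below_lceil (ℓ : ℝ) : (insert 0 {v | v ∈ Γ.LVset ∧ v < Γ.lceil ℓ}).Finite :=
  (Γ.LVset_finite.subset fun _ hv => hv.1).insert 0

theorem lceilm_lt_lceil {ℓ : ℝ} (hℓ : ℓ ≤ Γ.lmax) : Γ.lceilm ℓ < Γ.lceil ℓ := by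
  rcases (Set.insert_nonempty _ _).csSup_mem (Γ.finite_below_lceil ℓ) with h0 | hbelow
  · obtain ⟨x, hx⟩ := Γ.lceil_mem_LVset hℓ
    rw [lceilm, h0, ← hx]
    exact Γ.lhd_pos x
  · exact hbelow.2

theorem le_lceilm {ℓ v : ℝ} (hv : v ∈ Γ.LVset) (hlt : v < Γ.lceil ℓ) : v ≤ Γ.lceilm ℓ :=
  le_csSup (Γ.finite_below_lceil ℓ).bddAbove (Set.mem_insert_of_mem _ ⟨hv, hlt⟩)

theorem lceilm_lt_iff_lceil_le {ℓ v : ℝ} (hℓ : ℓ ≤ Γ.lmax) (hv : v ∈ Γ.LVset) :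
    Γ.lceilm ℓ < v ↔ Γ.lceil ℓ ≤ v :=
  ⟨fun hlt => not_lt.1 fun hv' => hlt.not_ge (Γ.le_lceilm hv hv'),
    (Γ.lceilm_lt_lceil hℓ).trans_le⟩

variable {Γ}

theorem AssociatedWith.dcond_eq {i : GrpI} {di : ((j : Fin N) → Xs j) → ℝ} {ℓ v : ℝ}
    (h : Γ.AssociatedWith i di ℓ) (hv : v ∈ Γ.LVset) :
    Γ.dcond i di v =
      (Γ.lceil ℓ - ℓ) / (Γ.lceil ℓ - Γ.lceilm ℓ) * (if Γ.lceilm ℓ < v then 1 else 0) +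
        (1 - (Γ.lceil ℓ - ℓ) / (Γ.lceil ℓ - Γ.lceilm ℓ)) * (if Γ.lceil ℓ < v then 1 else 0) := by
  obtain ⟨-, hℓ, hd⟩ := h
  obtain ⟨habove, hat, hbelow⟩ := hd v hv
  have hiff := Γ.lceilm_lt_iff_lceil_le hℓ hv
  rcases lt_trichotomy v (Γ.lceil ℓ) with hlt | rfl | hgt
  · rw [hbelow hlt, if_neg (mt hiff.1 hlt.not_ge), if_neg hlt.not_gt]
    ring
  · rw [hat rfl, if_pos (Γ.lceilm_lt_lceil hℓ), if_neg (lt_irrefl _)]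
    ring
  · rw [habove hgt, if_pos (hiff.2 hgt.le), if_pos hgt]
    ring

theorem AssociatedWith.om_mul_sum_eq_WW {i : GrpI} {di : ((j : Fin N) → Xs j) → ℝ} {ℓ : ℝ}
    (h : Γ.AssociatedWith i di ℓ) :
    Γ.om * ∑ x, di x * (Γ.p i x Cls.q - Γ.p i x Cls.u) = Γ.WW ℓ := by
  set θ := (Γ.lceil ℓ - ℓ) / (Γ.lceil ℓ - Γ.lceilm ℓ) with hθ
  have hgap : Γ.lceil ℓ - Γ.lceilm ℓ ≠ 0 := (sub_pos.2 (Γ.lceilm_lt_lceil h.2.1)).ne'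
  calc _ = θ * (Γ.om * ∑ x ∈ univ with Γ.lceilm ℓ < Γ.lhd x, (Γ.p i x Cls.q - Γ.p i x Cls.u)) +
        (1 - θ) *
          (Γ.om * ∑ x ∈ univ with Γ.lceil ℓ < Γ.lhd x, (Γ.p i x Cls.q - Γ.p i x Cls.u)) := by
        rw [Γ.sum_mul_sub_eq_sum_dcond_mul_sub, sum_congr rfl fun x _ => by
          rw [h.dcond_eq ⟨x, rfl⟩], sum_filter, sum_filter, mul_sum, mul_sum, mul_sum, mul_sum,
          mul_sum, ← sum_add_distrib]
        refine sum_congr rfl fun x _ => ?_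
        split_ifs <;> ring
    _ = θ * Γ.WWval (Γ.lceilm ℓ) + (1 - θ) * Γ.WWval (Γ.lceil ℓ) := by
        rw [Γ.om_mul_sum_filter_lt_lhd_eq_WWval, Γ.om_mul_sum_filter_lt_lhd_eq_WWval]
    _ = Γ.WW ℓ := by
        rw [WW, if_neg (sub_ne_zero.1 hgap), hθ]
        field_simp
        ring

end Game

/-- **Investment incentives under associated policies.** For any group `i` and
any within-group policy `d(i)` associated with a likelihood mixture
`ℓ ∈ [0, l_n]`, the investment incentive equals `WW(ℓ)`:
`ω ∑_x d(i,x)(p(x|i,q) − p(x|i,u)) = WW(ℓ)`.  In particular, under any fair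
decision policy the investment incentive is the same for both groups. -/
theorem incentive_eq_WW_of_associated
    {N : ℕ} {Xs : Fin N → Type} [∀ j, Fintype (Xs j)] [∀ j, Nonempty (Xs j)]
    (Γ : Game N Xs) :
    (∀ (i : GrpI) (di : ((j : Fin N) → Xs j) → ℝ) (ℓ : ℝ),
      Γ.AssociatedWith i di ℓ →
      Γ.om * ∑ x, di x * (Γ.p i x Cls.q - Γ.p i x Cls.u) = Γ.WW ℓ) ∧
    (∀ d : GrpI → ((j : Fin N) → Xs j) → ℝ, Γ.Fair d →
      Γ.om * ∑ x, d GrpI.w x * (Γ.p GrpI.w x Cls.q - Γ.p GrpI.w x Cls.u) =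
        Γ.om * ∑ x, d GrpI.b x * (Γ.p GrpI.b x Cls.q - Γ.p GrpI.b x Cls.u)) :=
  ⟨fun _ _ _ h => h.om_mul_sum_eq_WW, fun _ ⟨_, hw, hb⟩ => by
    rw [hw.om_mul_sum_eq_WW, hb.om_mul_sum_eq_WW]⟩
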